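/- arXiv:1410.3924 — 4 statements merged into one kernel-verified Lean document; each statement's English description precedes it below -/
import Mathlib

section
/- Let d ≥ 1, α > 0, and let S ⊂ ℤ^d be a nonempty finite set, k ∈ ℤ^d. Then the sum over i ∈ ℤ^d of (1 + |i - k|)^{-(2d+α)} · (1 + dist(S, i))^{-(d+α/2)} is bounded by C · (1 + dist(S, k))^{-(d+α/2)}, where C depends only on d and α. -/
/-!
Since `dist(S, k) ≤ dist(S, i) + |i - k|`, Peetre's inequality gives
`1 + dist(S, k) ≤ (1 + |i - k|) (1 + dist(S, i))`, so half of the decay of the kernel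
`(1 + |i - k|)^{-(2d+α)}` absorbs the factor `(1 + dist(S, i))^{-(d+α/2)}` up to
`(1 + dist(S, k))^{-(d+α/2)}`. What remains is `∑ᵢ (1 + |i - k|)^{-(d+α/2)}`, which is finite
because `d + α/2 > d`, by comparison with a product of one-dimensional `p`-series in the
coordinates of `i - k`.
-/

open Real

lemma summable_one_add_abs_int_rpow_neg {r : ℝ} (hr : 1 < r) :
    Summable fun n : ℤ => (1 + |(n : ℝ)|) ^ (-r) := by
  have hnat : Summable fun n : ℕ => (1 + (n : ℝ)) ^ (-r) := by
    refine ((summable_nat_add_iff 1).2 (summable_one_div_nat_rpow.2 hr)).congr fun n => ?_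
    rw [rpow_neg (by positivity), one_div]
    push_cast
    ring_nf
  exact .of_nat_of_neg (hnat.congr fun n => by simp) (hnat.congr fun n => by simp)

lemma summable_pi_prod_of_nonneg {α : Type*} {f : α → ℝ} (hf : Summable f) (hf₀ : 0 ≤ f)
    (d : ℕ) : Summable fun x : Fin d → α => ∏ j, f (x j) := by
  induction d with
  | zero => exact .of_finite
  | succ n ih =>
    rw [← (Fin.consEquiv fun _ => α).summable_iff]
    convert hf.mul_of_nonneg ih hf₀ (fun _ => Finset.prod_nonneg fun j _ => hf₀ _) using 1
    funext x
    simp [Fin.consEquiv, Fin.prod_univ_succ]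

lemma one_add_norm_rpow_neg_le_prod {d : ℕ} (hd : d ≠ 0) {p : ℝ} (hp : 0 ≤ p)
    (i : Fin d → ℤ) :
    (1 + ‖i‖) ^ (-p) ≤ ∏ j, (1 + |(i j : ℝ)|) ^ (-(p / d)) := by
  have hcoord : ∀ j, 1 + |(i j : ℝ)| ≤ 1 + ‖i‖ := fun j => by
    simpa [Int.norm_eq_abs] using norm_le_pi_norm i j
  calc (1 + ‖i‖) ^ (-p) = ∏ _j : Fin d, (1 + ‖i‖) ^ (-(p / d)) := by
        rw [Finset.prod_const, Finset.card_univ, Fintype.card_fin, ← rpow_mul_natCast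
          (by positivity)]
        field_simp
    _ ≤ ∏ j, (1 + |(i j : ℝ)|) ^ (-(p / d)) :=
        Finset.prod_le_prod (fun _ _ => by positivity) fun j _ =>
          rpow_le_rpow_of_nonpos (by positivity) (hcoord j) (by simp; positivity)

lemma summable_one_add_norm_rpow_neg {d : ℕ} {p : ℝ} (hp : d < p) :
    Summable fun i : Fin d → ℤ => (1 + ‖i‖) ^ (-p) := by
  rcases Nat.eq_zero_or_pos d with rfl | hd
  · exact .of_finite
  have hd₀ : (0 : ℝ) < d := by exact_mod_cast hd
  have hprod := summable_pi_prod_of_nonneg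
    (summable_one_add_abs_int_rpow_neg ((one_lt_div hd₀).2 hp)) (fun _ => by positivity) d
  exact hprod.of_nonneg_of_le (fun _ => by positivity)
    (one_add_norm_rpow_neg_le_prod hd.ne' (hd₀.le.trans hp.le))

lemma Finset.inf'_norm_sub_le_inf'_norm_sub_add {E : Type*} [SeminormedAddCommGroup E]
    {S : Finset E} (hS : S.Nonempty) (i k : E) :
    (S.inf' hS fun s => ‖s - k‖) ≤ (S.inf' hS fun s => ‖s - i‖) + ‖i - k‖ := by
  obtain ⟨s, hs, hsi⟩ := S.exists_mem_eq_inf' hS fun s => ‖s - i‖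
  calc (S.inf' hS fun s => ‖s - k‖) ≤ ‖s - k‖ := S.inf'_le _ hs
    _ ≤ ‖s - i‖ + ‖i - k‖ := norm_sub_le_norm_sub_add_norm_sub s i k
    _ = _ := by rw [hsi]

lemma Finset.inf'_norm_sub_nonneg {E : Type*} [SeminormedAddCommGroup E] {S : Finset E}
    (hS : S.Nonempty) (i : E) : 0 ≤ S.inf' hS fun s => ‖s - i‖ :=
  S.le_inf' hS _ fun _ _ => norm_nonneg _

lemma one_add_rpow_neg_two_mul_mul_le {a b c p : ℝ} (ha : 0 ≤ a) (hb : 0 ≤ b) (hc : 0 ≤ c)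
    (hcab : c ≤ b + a) (hp : 0 ≤ p) :
    (1 + a) ^ (-(2 * p)) * (1 + b) ^ (-p) ≤ (1 + a) ^ (-p) * (1 + c) ^ (-p) := by
  have hpeetre : 1 + c ≤ (1 + a) * (1 + b) := by nlinarith
  calc (1 + a) ^ (-(2 * p)) * (1 + b) ^ (-p) = (1 + a) ^ (-p) * ((1 + a) * (1 + b)) ^ (-p) := by
        rw [mul_rpow (by positivity) (by positivity), two_mul, neg_add,
          rpow_add (by positivity)]
        ring
    _ ≤ (1 + a) ^ (-p) * (1 + c) ^ (-p) :=
        mul_le_mul_of_nonneg_left (rpow_le_rpow_of_nonpos (by positivity) hpeetre (by simpa))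
          (by positivity)

lemma convolution_term_le {E : Type*} [SeminormedAddCommGroup E] {S : Finset E}
    (hS : S.Nonempty) (i k : E) {p : ℝ} (hp : 0 ≤ p) :
    (1 + ‖i - k‖) ^ (-(2 * p)) * (1 + S.inf' hS fun s => ‖s - i‖) ^ (-p) ≤
      (1 + ‖i - k‖) ^ (-p) * (1 + S.inf' hS fun s => ‖s - k‖) ^ (-p) :=
  one_add_rpow_neg_two_mul_mul_le (norm_nonneg _) (S.inf'_norm_sub_nonneg hS i)
    (S.inf'_norm_sub_nonneg hS k) (S.inf'_norm_sub_le_inf'_norm_sub_add hS i k) hp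

lemma summable_one_add_norm_sub_rpow_neg {d : ℕ} {p : ℝ} (hp : d < p) (k : Fin d → ℤ) :
    Summable fun i : Fin d → ℤ => (1 + ‖i - k‖) ^ (-p) :=
  (Equiv.subRight k).summable_iff.2 (summable_one_add_norm_rpow_neg hp)

section Convolution

variable {d : ℕ} {p : ℝ} (S : Finset (Fin d → ℤ)) (hS : S.Nonempty) (k : Fin d → ℤ)

theorem summable_convolution (hp : d < p) :
    Summable fun i : Fin d → ℤ =>
      (1 + ‖i - k‖) ^ (-(2 * p)) * (1 + S.inf' hS fun s => ‖s - i‖) ^ (-p) := by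
  refine Summable.of_nonneg_of_le (fun i => ?_)
    (fun i => convolution_term_le hS i k ((Nat.cast_nonneg d).trans hp.le))
    ((summable_one_add_norm_sub_rpow_neg hp k).mul_right _)
  have := S.inf'_norm_sub_nonneg hS i
  positivity

theorem tsum_convolution_le (hp : d < p) :
    ∑' i : Fin d → ℤ, (1 + ‖i - k‖) ^ (-(2 * p)) * (1 + S.inf' hS fun s => ‖s - i‖) ^ (-p) ≤
      (∑' i : Fin d → ℤ, (1 + ‖i‖) ^ (-p)) * (1 + S.inf' hS fun s => ‖s - k‖) ^ (-p) :=
  calc _ ≤ ∑' i : Fin d → ℤ, (1 + ‖i - k‖) ^ (-p) * (1 + S.inf' hS fun s => ‖s - k‖) ^ (-p) :=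
        (summable_convolution S hS k hp).tsum_le_tsum
          (fun i => convolution_term_le hS i k ((Nat.cast_nonneg d).trans hp.le))
          ((summable_one_add_norm_sub_rpow_neg hp k).mul_right _)
    _ = _ := by
        rw [tsum_mul_right, ← (Equiv.subRight k).tsum_eq fun i => (1 + ‖i‖) ^ (-p)]
        rfl

end Convolution

theorem convolution_decay_estimate_general (d : ℕ) (α : ℝ) (hα : 0 < α) :
    ∃ C : ℝ, 0 < C ∧ ∀ (S : Finset (Fin d → ℤ)) (hS : S.Nonempty) (k : Fin d → ℤ),
      Summable (fun i : Fin d → ℤ =>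
        (1 + ‖i - k‖) ^ (-(2 * (d : ℝ) + α)) *
          (1 + S.inf' hS fun s => ‖s - i‖) ^ (-((d : ℝ) + α / 2))) ∧
      ∑' i : Fin d → ℤ,
          (1 + ‖i - k‖) ^ (-(2 * (d : ℝ) + α)) *
            (1 + S.inf' hS fun s => ‖s - i‖) ^ (-((d : ℝ) + α / 2))
        ≤ C * (1 + S.inf' hS fun s => ‖s - k‖) ^ (-((d : ℝ) + α / 2)) := by
  set p : ℝ := d + α / 2 with hp_def
  have hp : (d : ℝ) < p := by rw [hp_def]; linarith
  have h2p : 2 * (d : ℝ) + α = 2 * p := by ring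
  refine ⟨∑' i : Fin d → ℤ, (1 + ‖i‖) ^ (-p),
    (summable_one_add_norm_rpow_neg hp).tsum_pos (fun _ => by positivity) 0 (by positivity),
    fun S hS k => ?_⟩
  rw [h2p]
  exact ⟨summable_convolution S hS k hp, tsum_convolution_le S hS k hp⟩

theorem convolution_decay_estimate (d : ℕ) (hd : 1 ≤ d) (α : ℝ) (hα : 0 < α) :
    ∃ C : ℝ, 0 < C ∧ ∀ (S : Finset (Fin d → ℤ)) (hS : S.Nonempty) (k : Fin d → ℤ),
      Summable (fun i : Fin d → ℤ =>
        (1 + ‖i - k‖) ^ (-(2 * (d : ℝ) + α)) *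
          (1 + S.inf' hS fun s => ‖s - i‖) ^ (-((d : ℝ) + α / 2))) ∧
      ∑' i : Fin d → ℤ,
          (1 + ‖i - k‖) ^ (-(2 * (d : ℝ) + α)) *
            (1 + S.inf' hS fun s => ‖s - i‖) ^ (-((d : ℝ) + α / 2))
        ≤ C * (1 + S.inf' hS fun s => ‖s - k‖) ^ (-((d : ℝ) + α / 2)) :=
  convolution_decay_estimate_general d α hα
end

section
/- Conversely, if μ is a probability measure on ℝ^n such that for every f ∈ H¹(μ) the weak solution φ of the Poisson equation ∫∇ξ·∇φ dμ = ∫ ξ(f - ∫f dμ) dμ satisfies ∫|∇φ|² dμ ≤ ρ^{-2} ∫|∇f|² dμ, then μ satisfies the Poincaré inequality Var_μ(f) ≤ ρ^{-1} ∫|∇f|² dμ. -/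
open MeasureTheory Real

/-- The weighted Sobolev space `H¹(μ)`. -/
def H1 {n : ℕ} (μ : Measure (EuclideanSpace ℝ (Fin n)))
    (f : EuclideanSpace ℝ (Fin n) → ℝ) : Prop :=
  Differentiable ℝ f ∧ MemLp f 2 μ ∧ MemLp (fun x => ‖gradient f x‖) 2 μ

lemma measurable_gradient {n : ℕ} (f : EuclideanSpace ℝ (Fin n) → ℝ) :
    Measurable (gradient f) := by
  have h : Measurable (fderiv ℝ f) := measurable_fderiv ℝ f
  exact ((InnerProductSpace.toDual ℝ (EuclideanSpace ℝ (Fin n))).symm.continuous.measurable).comp h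

theorem dual_poincare_implies_poincare {n : ℕ}
    (H : EuclideanSpace ℝ (Fin n) → ℝ) (hH : ContDiff ℝ (⊤ : ℕ∞) H) (Z : ℝ) (hZ : 0 < Z)
    (μ : Measure (EuclideanSpace ℝ (Fin n)))
    (hμ : μ = volume.withDensity fun x => ENNReal.ofReal (Z⁻¹ * Real.exp (-H x)))
    [IsProbabilityMeasure μ] (ρ : ℝ) (hρ : 0 < ρ)
    (hdual : ∀ f, H1 μ f → ∃ φ, H1 μ φ ∧
      (∀ ξ, H1 μ ξ →
        ∫ x, (inner ℝ (gradient ξ x) (gradient φ x) : ℝ) ∂μ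
          = ∫ x, ξ x * (f x - ∫ y, f y ∂μ) ∂μ) ∧
      ∫ x, ‖gradient φ x‖ ^ 2 ∂μ ≤ (ρ⁻¹) ^ 2 * ∫ x, ‖gradient f x‖ ^ 2 ∂μ) :
    ∀ f, H1 μ f →
      ∫ x, (f x) ^ 2 ∂μ - (∫ x, f x ∂μ) ^ 2 ≤ ρ⁻¹ * ∫ x, ‖gradient f x‖ ^ 2 ∂μ := by
  intro f hf
  obtain ⟨φ, hφ, heq, hbound⟩ := hdual f hf
  have key := heq f hf
  set m : ℝ := ∫ y, f y ∂μ with hm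
  -- integrability facts
  have hf_int : Integrable f μ := hf.2.1.integrable one_le_two
  have hf_sq : Integrable (fun x => f x ^ 2) μ := hf.2.1.integrable_sq
  -- the right-hand side of `key` equals the variance
  have hvar : ∫ x, f x * (f x - m) ∂μ = ∫ x, (f x) ^ 2 ∂μ - m ^ 2 := by
    have h1 : ∀ x, f x * (f x - m) = f x ^ 2 - m * f x := by intro x; ring
    simp_rw [h1]
    rw [integral_sub hf_sq (hf_int.const_mul m), integral_const_mul]
    have : μ Set.univ = 1 := measure_univ
    rw [← hm]; ring
  -- Cauchy–Schwarz
  have hmf : Measurable (gradient f) := measurable_gradient f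
  have hmφ : Measurable (gradient φ) := measurable_gradient φ
  have hgf_sq : Integrable (fun x => ‖gradient f x‖ ^ 2) μ := hf.2.2.integrable_sq
  have hgφ_sq : Integrable (fun x => ‖gradient φ x‖ ^ 2) μ := hφ.2.2.integrable_sq
  have hprod_int : Integrable (fun x => ‖gradient f x‖ * ‖gradient φ x‖) μ := by
    refine Integrable.mono' (((hgf_sq.add hgφ_sq).div_const 2)) ?_ ?_
    · exact (hmf.norm.mul hmφ.norm).aestronglyMeasurable
    · filter_upwards with x
      rw [Real.norm_of_nonneg (by positivity)]
      simp only [Pi.add_apply]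
      nlinarith [sq_nonneg (‖gradient f x‖ - ‖gradient φ x‖)]
  have hinner_int : Integrable (fun x => (inner ℝ (gradient f x) (gradient φ x) : ℝ)) μ := by
    refine Integrable.mono' hprod_int ?_ ?_
    · exact (hmf.inner hmφ).aestronglyMeasurable
    · filter_upwards with x
      exact (abs_real_inner_le_norm _ _ : |(inner ℝ (gradient f x) (gradient φ x) : ℝ)| ≤ _)
  have hpt : ∀ x, (inner ℝ (gradient f x) (gradient φ x) : ℝ) ≤ ‖gradient f x‖ * ‖gradient φ x‖ :=
    fun x => real_inner_le_norm _ _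
  have hCS1 : ∫ x, (inner ℝ (gradient f x) (gradient φ x) : ℝ) ∂μ
      ≤ ∫ x, ‖gradient f x‖ * ‖gradient φ x‖ ∂μ :=
    integral_mono hinner_int hprod_int hpt
  set A : ℝ := ∫ x, ‖gradient f x‖ ^ 2 ∂μ with hA
  set B : ℝ := ∫ x, ‖gradient φ x‖ ^ 2 ∂μ with hB
  have hA0 : 0 ≤ A := integral_nonneg fun x => sq_nonneg _
  have hB0 : 0 ≤ B := integral_nonneg fun x => sq_nonneg _
  have hconj : Real.HolderConjugate 2 2 := by constructor <;> norm_num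
  have h2 : (ENNReal.ofReal (2:ℝ)) = 2 := by norm_num
  have hCS2 : ∫ x, ‖gradient f x‖ * ‖gradient φ x‖ ∂μ
      ≤ (∫ x, ‖gradient f x‖ ^ (2:ℝ) ∂μ) ^ (1/(2:ℝ)) * (∫ x, ‖gradient φ x‖ ^ (2:ℝ) ∂μ) ^ (1/(2:ℝ)) := by
    refine integral_mul_le_Lp_mul_Lq_of_nonneg hconj ?_ ?_ ?_ ?_
    · filter_upwards with x using norm_nonneg _
    · filter_upwards with x using norm_nonneg _
    · rw [h2]; exact hf.2.2
    · rw [h2]; exact hφ.2.2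
  have hrw : ∀ g : EuclideanSpace ℝ (Fin n) → ℝ,
      (∫ x, ‖gradient g x‖ ^ (2:ℝ) ∂μ) = ∫ x, ‖gradient g x‖ ^ 2 ∂μ := by
    intro g; congr 1; funext x
    rw [show ((2:ℝ)) = ((2:ℕ):ℝ) by norm_num, Real.rpow_natCast]
  rw [hrw f, hrw φ, ← hA, ← hB] at hCS2
  -- combine
  have hBineq : B ^ (1/(2:ℝ)) ≤ ρ⁻¹ * A ^ (1/(2:ℝ)) := by
    have h1 : B ≤ (ρ⁻¹) ^ 2 * A := hbound
    have h2' : B ^ (1/(2:ℝ)) ≤ ((ρ⁻¹) ^ 2 * A) ^ (1/(2:ℝ)) :=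
      Real.rpow_le_rpow hB0 h1 (by norm_num)
    calc B ^ (1/(2:ℝ)) ≤ ((ρ⁻¹) ^ 2 * A) ^ (1/(2:ℝ)) := h2'
      _ = ρ⁻¹ * A ^ (1/(2:ℝ)) := by
          rw [Real.mul_rpow (by positivity) hA0, ← Real.rpow_natCast ρ⁻¹ 2,
            ← Real.rpow_mul (by positivity)]
          norm_num
  have hAA : A ^ (1/(2:ℝ)) * A ^ (1/(2:ℝ)) = A := by
    rw [← Real.rpow_add' hA0 (by norm_num)]; norm_num
  calc ∫ x, (f x) ^ 2 ∂μ - m ^ 2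
      = ∫ x, (inner ℝ (gradient f x) (gradient φ x) : ℝ) ∂μ := by rw [key, hvar]
    _ ≤ ∫ x, ‖gradient f x‖ * ‖gradient φ x‖ ∂μ := hCS1
    _ ≤ A ^ (1/(2:ℝ)) * B ^ (1/(2:ℝ)) := hCS2
    _ ≤ A ^ (1/(2:ℝ)) * (ρ⁻¹ * A ^ (1/(2:ℝ))) := by
        refine mul_le_mul_of_nonneg_left hBineq (by positivity)
    _ = ρ⁻¹ * (A ^ (1/(2:ℝ)) * A ^ (1/(2:ℝ))) := by ring
    _ = ρ⁻¹ * A := by rw [hAA]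
end

section
/- Let φ solve the Poisson equation for f with respect to μ, and let g ∈ H¹(μ) depend only on the coordinates in a finite set S ⊂ {1,…,n}. Then |Cov_μ(f, g)| ≤ (∫ Σ_{i∈S} |∇_i φ|² dμ)^{1/2} · (∫ Σ_{i∈S} |∇_i g|² dμ)^{1/2}. -/
open MeasureTheory Real

private lemma integrable_mul_of_memL2 {α : Type*} [MeasurableSpace α] {μ : Measure α}
    {f g : α → ℝ} (hf : MemLp f 2 μ) (hg : MemLp g 2 μ) :
    Integrable (fun x => f x * g x) μ := by
  have h := hg.smul (r := 1) hf (hpqr := ⟨by simp [ENNReal.inv_two_add_inv_two]⟩)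
  rw [memLp_one_iff_integrable] at h
  exact h

private lemma measurable_gradient_apply {n : ℕ} (ψ : EuclideanSpace ℝ (Fin n) → ℝ) (i : Fin n) :
    Measurable fun x => gradient ψ x i := by
  have h1 : Measurable (gradient ψ) :=
    ((InnerProductSpace.toDual ℝ (EuclideanSpace ℝ (Fin n))).symm.continuous.measurable).comp
      (measurable_fderiv ℝ ψ)
  exact ((EuclideanSpace.proj i : EuclideanSpace ℝ (Fin n) →L[ℝ] ℝ).continuous.measurable).comp h1

private lemma coord_sq_le {n : ℕ} (v : EuclideanSpace ℝ (Fin n)) (S : Finset (Fin n)) :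
    ∑ i ∈ S, (v i) ^ 2 ≤ ‖v‖ ^ 2 := by
  have h : ‖v‖ ^ 2 = ∑ i, (v i) ^ 2 := by
    rw [EuclideanSpace.norm_eq, Real.sq_sqrt (by positivity)]
    simp [Real.norm_eq_abs, sq_abs]
  rw [h]
  exact Finset.sum_le_sum_of_subset_of_nonneg (Finset.subset_univ S) (fun i _ _ => by positivity)

private lemma memL2_coord {n : ℕ} {μ : Measure (EuclideanSpace ℝ (Fin n))}
    {ψ : EuclideanSpace ℝ (Fin n) → ℝ} (hψ : MemLp (fun x => ‖gradient ψ x‖) 2 μ) (i : Fin n) :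
    MemLp (fun x => gradient ψ x i) 2 μ := by
  refine MemLp.of_le hψ ((measurable_gradient_apply ψ i).aestronglyMeasurable) ?_
  filter_upwards with x
  rw [Real.norm_eq_abs, norm_norm, ← Real.sqrt_sq_eq_abs, ← Real.sqrt_sq (norm_nonneg _)]
  apply Real.sqrt_le_sqrt
  simpa using coord_sq_le (gradient ψ x) {i}

private lemma memL2_sqrt_sum {n : ℕ} {μ : Measure (EuclideanSpace ℝ (Fin n))}
    {ψ : EuclideanSpace ℝ (Fin n) → ℝ} (hψ : MemLp (fun x => ‖gradient ψ x‖) 2 μ)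
    (S : Finset (Fin n)) :
    MemLp (fun x => Real.sqrt (∑ i ∈ S, (gradient ψ x i) ^ 2)) 2 μ := by
  refine MemLp.of_le hψ ?_ ?_
  · exact ((Finset.measurable_sum S fun i _ =>
      ((measurable_gradient_apply ψ i).pow_const 2)).sqrt).aestronglyMeasurable
  · filter_upwards with x
    rw [Real.norm_eq_abs, norm_norm, abs_of_nonneg (Real.sqrt_nonneg _),
      ← Real.sqrt_sq (norm_nonneg _)]
    exact Real.sqrt_le_sqrt (coord_sq_le (gradient ψ x) S)

theorem covariance_cauchy_schwarz_support {n : ℕ}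
    (H : EuclideanSpace ℝ (Fin n) → ℝ) (hH : ContDiff ℝ (⊤ : ℕ∞) H) (Z : ℝ) (hZ : 0 < Z)
    (μ : Measure (EuclideanSpace ℝ (Fin n)))
    (hμ : μ = volume.withDensity fun x => ENNReal.ofReal (Z⁻¹ * Real.exp (-H x)))
    [IsProbabilityMeasure μ] (S : Finset (Fin n))
    (f g φ : EuclideanSpace ℝ (Fin n) → ℝ) (hf : H1 μ f) (hg : H1 μ g) (hφ : H1 μ φ)
    (hgS : ∀ i ∉ S, ∀ x, gradient g x i = 0)
    (hweak : ∀ ξ, H1 μ ξ →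
      ∫ x, (inner ℝ (gradient ξ x) (gradient φ x) : ℝ) ∂μ
        = ∫ x, ξ x * (f x - ∫ y, f y ∂μ) ∂μ) :
    |∫ x, f x * g x ∂μ - (∫ x, f x ∂μ) * (∫ x, g x ∂μ)|
      ≤ Real.sqrt (∫ x, ∑ i ∈ S, (gradient φ x i) ^ 2 ∂μ) *
        Real.sqrt (∫ x, ∑ i ∈ S, (gradient g x i) ^ 2 ∂μ) := by
  classical
  set m := ∫ y, f y ∂μ with hm
  have hfg : Integrable (fun x => f x * g x) μ := integrable_mul_of_memL2 hf.2.1 hg.2.1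
  have hgi : Integrable g μ := hg.2.1.integrable one_le_two
  have hcov : ∫ x, g x * (f x - m) ∂μ
      = (∫ x, f x * g x ∂μ) - m * (∫ x, g x ∂μ) := by
    have heq : (fun x => g x * (f x - m)) = fun x => f x * g x - m * g x := by
      funext x; ring
    rw [heq, integral_sub hfg (hgi.const_mul m), integral_const_mul]
  have hkey := hweak g hg
  have hsum : ∀ x, (inner ℝ (gradient g x) (gradient φ x) : ℝ)
      = ∑ i ∈ S, gradient g x i * gradient φ x i := by
    intro x
    have h1 : (inner ℝ (gradient g x) (gradient φ x) : ℝ)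
        = ∑ i, gradient g x i * gradient φ x i := by
      simp only [PiLp.inner_apply, RCLike.inner_apply, conj_trivial]
      exact Finset.sum_congr rfl fun i _ => mul_comm _ _
    rw [h1]
    exact (Finset.sum_subset (Finset.subset_univ S)
      (fun i _ hi => by simp [hgS i hi x])).symm
  set A := fun x => Real.sqrt (∑ i ∈ S, (gradient φ x i) ^ 2) with hA
  set B := fun x => Real.sqrt (∑ i ∈ S, (gradient g x i) ^ 2) with hB
  have hAm : MemLp A 2 μ := memL2_sqrt_sum hφ.2.2 S
  have hBm : MemLp B 2 μ := memL2_sqrt_sum hg.2.2 S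
  have hABint : Integrable (fun x => A x * B x) μ := integrable_mul_of_memL2 hAm hBm
  have hptwise : ∀ x, |∑ i ∈ S, gradient g x i * gradient φ x i| ≤ A x * B x := by
    intro x
    rw [← Real.sqrt_sq_eq_abs, hA, hB, ← Real.sqrt_mul (by positivity)]
    apply Real.sqrt_le_sqrt
    calc (∑ i ∈ S, gradient g x i * gradient φ x i) ^ 2
        ≤ (∑ i ∈ S, (gradient g x i) ^ 2) * ∑ i ∈ S, (gradient φ x i) ^ 2 :=
          Finset.sum_mul_sq_le_sq_mul_sq S _ _
      _ = (∑ i ∈ S, (gradient φ x i) ^ 2) * ∑ i ∈ S, (gradient g x i) ^ 2 := mul_comm _ _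
  calc |∫ x, f x * g x ∂μ - (∫ x, f x ∂μ) * (∫ x, g x ∂μ)|
      = |∫ x, ∑ i ∈ S, gradient g x i * gradient φ x i ∂μ| := by
        rw [← hcov, ← hkey]
        exact congrArg abs (integral_congr_ae (Filter.Eventually.of_forall hsum)).symm ▸ rfl
    _ ≤ ∫ x, A x * B x ∂μ := by
        rw [show |∫ x, ∑ i ∈ S, gradient g x i * gradient φ x i ∂μ|
          = ‖∫ x, ∑ i ∈ S, gradient g x i * gradient φ x i ∂μ‖ from rfl]
        refine (norm_integral_le_integral_norm _).trans ?_
        refine integral_mono_of_nonneg (Filter.Eventually.of_forall fun x => norm_nonneg _)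
          hABint (Filter.Eventually.of_forall fun x => ?_)
        simpa [Real.norm_eq_abs] using hptwise x
    _ ≤ (∫ x, A x ^ (2:ℝ) ∂μ) ^ ((1:ℝ)/2) * (∫ x, B x ^ (2:ℝ) ∂μ) ^ ((1:ℝ)/2) := by
        refine integral_mul_le_Lp_mul_Lq_of_nonneg Real.HolderConjugate.two_two
          (Filter.Eventually.of_forall fun x => Real.sqrt_nonneg _)
          (Filter.Eventually.of_forall fun x => Real.sqrt_nonneg _) ?_ ?_
        · simpa [ENNReal.ofReal_ofNat] using hAm
        · simpa [ENNReal.ofReal_ofNat] using hBm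
    _ = Real.sqrt (∫ x, ∑ i ∈ S, (gradient φ x i) ^ 2 ∂μ) *
        Real.sqrt (∫ x, ∑ i ∈ S, (gradient g x i) ^ 2 ∂μ) := by
        have e1 : ∀ x, A x ^ (2:ℝ) = ∑ i ∈ S, (gradient φ x i) ^ 2 := fun x => by
          rw [Real.rpow_two, hA, Real.sq_sqrt (by positivity)]
        have e2 : ∀ x, B x ^ (2:ℝ) = ∑ i ∈ S, (gradient g x i) ^ 2 := fun x => by
          rw [Real.rpow_two, hB, Real.sq_sqrt (by positivity)]
        simp_rw [e1, e2, Real.sqrt_eq_rpow]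
end

section
/- Let A be a real n×n matrix that is strictly diagonally dominant: there exists δ > 0 with A_{ii} ≥ δ + Σ_{j≠i} |A_{ij}| for all i, and suppose A_{ii} > 0 and A_{ij} ≤ 0 for i ≠ j. Then A is invertible and all entries of A^{-1} are non-negative. -/
open Matrix

section MonotoneMatrix

variable {ι K : Type*} [Fintype ι]

/-- Collatz's monotone matrices: `A *ᵥ x ≥ 0` forces `x ≥ 0`. -/
def Matrix.IsMonotone [Ring K] [PartialOrder K] (A : Matrix ι ι K) : Prop :=
  ∀ x : ι → K, 0 ≤ A *ᵥ x → 0 ≤ x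

/-- At a coordinate where `x` is minimal and negative, `(A *ᵥ x) i ≤ (∑ j, A i j) * x i < 0`. -/
theorem Matrix.isMonotone_of_offDiag_nonpos_of_rowSum_pos [Ring K] [LinearOrder K]
    [IsStrictOrderedRing K] {A : Matrix ι ι K}
    (hoff : ∀ i j, i ≠ j → A i j ≤ 0) (hrow : ∀ i, 0 < ∑ j, A i j) : A.IsMonotone := by
  intro x hAx
  by_contra hx
  obtain ⟨k, hk⟩ := not_forall.1 hx
  obtain ⟨i, -, hmin⟩ := Finset.exists_min_image Finset.univ x ⟨k, Finset.mem_univ k⟩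
  have hxi : x i < 0 := (hmin k (Finset.mem_univ k)).trans_lt (not_le.1 hk)
  have hterm : ∀ j, A i j * x j ≤ A i j * x i := by
    intro j
    rcases eq_or_ne i j with rfl | hij
    · rfl
    · exact mul_le_mul_of_nonpos_left (hmin j (Finset.mem_univ j)) (hoff i j hij)
  have : (A *ᵥ x) i < 0 :=
    calc (A *ᵥ x) i = ∑ j, A i j * x j := rfl
      _ ≤ ∑ j, A i j * x i := Finset.sum_le_sum fun j _ => hterm j
      _ = (∑ j, A i j) * x i := (Finset.sum_mul ..).symm
      _ < 0 := mul_neg_of_pos_of_neg (hrow i) hxi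
  exact (hAx i).not_gt this

variable [DecidableEq ι] [Field K] [LinearOrder K] [IsStrictOrderedRing K]

theorem Matrix.IsMonotone.isUnit {A : Matrix ι ι K} (hA : A.IsMonotone) : IsUnit A := by
  refine mulVec_injective_iff_isUnit.1 fun x y hxy => ?_
  have hzero : A *ᵥ (x - y) = 0 := by rw [mulVec_sub, hxy, sub_self]
  have h₁ := hA (x - y) hzero.ge
  have h₂ := hA (y - x) (by rw [← neg_sub, mulVec_neg, hzero, neg_zero])
  exact le_antisymm (sub_nonneg.1 h₂) (sub_nonneg.1 h₁)

/-- The `j`-th column of `A⁻¹` solves `A *ᵥ x = Pi.single j 1 ≥ 0`. -/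
theorem Matrix.IsMonotone.inv_nonneg {A : Matrix ι ι K} (hA : A.IsMonotone) (i j : ι) :
    0 ≤ A⁻¹ i j := by
  have hcol : A *ᵥ A⁻¹.col j = Pi.single j 1 := by
    rw [← mulVec_single_one, mulVec_mulVec,
      mul_nonsing_inv A ((isUnit_iff_isUnit_det A).1 hA.isUnit), one_mulVec]
  exact hA _ (hcol ▸ Pi.single_nonneg.2 zero_le_one) i

end MonotoneMatrix

theorem rowSum_pos_of_diag_dominant {ι K : Type*} [Fintype ι] [DecidableEq ι]
    [AddCommGroup K] [LinearOrder K] [IsOrderedAddMonoid K] {A : Matrix ι ι K} {δ : K}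
    (hδ : 0 < δ)
    (hdom : ∀ i, δ + ∑ j ∈ Finset.univ.erase i, |A i j| ≤ A i i) (i : ι) :
    0 < ∑ j, A i j := by
  have hoffdiag : -∑ j ∈ Finset.univ.erase i, |A i j| ≤ ∑ j ∈ Finset.univ.erase i, A i j := by
    rw [← Finset.sum_neg_distrib]
    exact Finset.sum_le_sum fun j _ => neg_abs_le (A i j)
  rw [← Finset.add_sum_erase _ _ (Finset.mem_univ i)]
  calc 0 < δ := hδ
    _ ≤ A i i + -∑ j ∈ Finset.univ.erase i, |A i j| := by
      rw [← sub_eq_add_neg]; exact le_sub_iff_add_le.2 (hdom i)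
    _ ≤ A i i + ∑ j ∈ Finset.univ.erase i, A i j := by gcongr

theorem diag_dominant_inverse_nonneg_general {n : ℕ} (A : Matrix (Fin n) (Fin n) ℝ)
    (δ : ℝ) (hδ : 0 < δ)
    (hdom : ∀ i, δ + ∑ j ∈ Finset.univ.erase i, |A i j| ≤ A i i)
    (hoff : ∀ i j, i ≠ j → A i j ≤ 0) :
    IsUnit A ∧ ∀ i j, 0 ≤ A⁻¹ i j := by
  have hA : A.IsMonotone :=
    isMonotone_of_offDiag_nonpos_of_rowSum_pos hoff (rowSum_pos_of_diag_dominant hδ hdom)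
  exact ⟨hA.isUnit, hA.inv_nonneg⟩

theorem diag_dominant_inverse_nonneg {n : ℕ} (A : Matrix (Fin n) (Fin n) ℝ)
    (δ : ℝ) (hδ : 0 < δ)
    (hdom : ∀ i, δ + ∑ j ∈ Finset.univ.erase i, |A i j| ≤ A i i)
    (hdiag : ∀ i, 0 < A i i)
    (hoff : ∀ i j, i ≠ j → A i j ≤ 0) :
    IsUnit A ∧ ∀ i j, 0 ≤ A⁻¹ i j :=
  diag_dominant_inverse_nonneg_general A δ hδ hdom hoff
end
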